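/- arXiv:math/0306263 — 3 statements merged into one kernel-verified Lean document; each statement's English description precedes it below -/
import Mathlib

section
/- Let X ~ N(0, h) with h > 0, and E_c := exp(c·X − c²h/2) for c ∈ ℂ. Then for every fixed c ∈ ℂ, (E_r − 1)/r · E_c converges to X·E_c in L²(Ω) as the real parameter r → 0. -/
/-!
Write `E_r(x) = exp (r x - r² h / 2)` (`wickExp h r x`). The difference quotients
`(E_r(x) - 1) / r` converge to `∂_r E_r(x)|_{r=0} = x`, and by the mean value theorem they are
bounded, for `|r| ≤ 1`, by `(|x| + h) e^{|x|}`. Together with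
`|E_c(x)| ≤ exp (|c| |x| + |c|² h / 2)` this dominates the integrand by a constant times `exp ((4 + 2|c|) |X|)`, which is integrable
because a Gaussian has exponential moments of all orders; dominated convergence concludes.
-/

open MeasureTheory ProbabilityTheory Complex Filter NNReal Topology

noncomputable def wickExp (h r x : ℝ) : ℝ := Real.exp (r * x - r ^ 2 * h / 2)

section wickExp

variable (h x : ℝ)

@[simp]
lemma wickExp_zero : wickExp h 0 x = 1 := by simp [wickExp]

lemma hasDerivAt_wickExp (r : ℝ) :
    HasDerivAt (fun r ↦ wickExp h r x) ((x - r * h) * wickExp h r x) r := by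
  have hpoly : HasDerivAt (fun r : ℝ ↦ r * x - r ^ 2 * h / 2) (x - r * h) r := by
    refine (((hasDerivAt_id' r).mul_const x).fun_sub
      (((hasDerivAt_pow 2 r).mul_const h).div_const 2)).congr_deriv ?_
    push_cast; ring
  rw [mul_comm]
  exact hpoly.exp

lemma tendsto_wickExp_sub_one_div :
    Tendsto (fun r ↦ (wickExp h r x - 1) / r) (𝓝[≠] 0) (𝓝 x) := by
  have hslope := hasDerivAt_iff_tendsto_slope.mp (hasDerivAt_wickExp h x 0)
  rw [zero_mul, sub_zero, wickExp_zero, mul_one] at hslope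
  refine hslope.congr fun r ↦ ?_
  rw [slope_def_field, wickExp_zero, sub_zero]

variable {h}

lemma abs_wickExp_sub_one_div_le (hh : 0 ≤ h) {r : ℝ} (hr : |r| ≤ 1) :
    |(wickExp h r x - 1) / r| ≤ (|x| + h) * Real.exp |x| := by
  have hderiv_le : ∀ s ∈ Set.Icc (-1 : ℝ) 1,
      ‖(x - s * h) * wickExp h s x‖ ≤ (|x| + h) * Real.exp |x| := by
    intro s hs
    have hs' : |s| ≤ 1 := abs_le.mpr hs
    rw [norm_mul, Real.norm_eq_abs, Real.norm_eq_abs, wickExp, Real.abs_exp]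
    gcongr
    · calc |x - s * h| ≤ |x| + |s| * h := by
            simpa [abs_mul, abs_of_nonneg hh] using abs_sub x (s * h)
        _ ≤ |x| + h := by nlinarith
    · calc s * x - s ^ 2 * h / 2 ≤ |s| * |x| := by
            nlinarith [neg_abs_le (s * x), abs_mul s x, sq_nonneg s, le_abs_self (s * x)]
        _ ≤ |x| := by nlinarith [abs_nonneg x]
  have hmvt := Convex.norm_image_sub_le_of_norm_hasDerivWithin_le
    (fun s _ ↦ (hasDerivAt_wickExp h x s).hasDerivWithinAt) hderiv_le (convex_Icc _ _)
    (show (0 : ℝ) ∈ Set.Icc (-1) 1 by norm_num) (abs_le.mp hr)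
  rw [wickExp_zero, sub_zero, Real.norm_eq_abs, Real.norm_eq_abs] at hmvt
  rw [abs_div]
  exact div_le_of_le_mul₀ (abs_nonneg r) (by positivity) hmvt

lemma abs_wickExp_sub_one_div_sub_le (hh : 0 ≤ h) {r : ℝ} (hr : |r| ≤ 1) :
    |(wickExp h r x - 1) / r - x| ≤ 2 * Real.exp (h + 2 * |x|) := by
  have hq := abs_wickExp_sub_one_div_le x hh hr
  have hlin : |x| + h ≤ Real.exp (|x| + h) := by linarith [Real.add_one_le_exp (|x| + h)]
  have hexp : 1 ≤ Real.exp |x| := Real.one_le_exp (abs_nonneg x)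
  calc |(wickExp h r x - 1) / r - x| ≤ (|x| + h) * Real.exp |x| + |x| := by
        linarith [abs_sub ((wickExp h r x - 1) / r) x]
    _ ≤ 2 * ((|x| + h) * Real.exp |x|) := by nlinarith [abs_nonneg x]
    _ ≤ 2 * (Real.exp (|x| + h) * Real.exp |x|) := by gcongr
    _ = 2 * Real.exp (h + 2 * |x|) := by rw [← Real.exp_add]; ring_nf

end wickExp

lemma norm_cexp_mul_sub_sq_le {h : ℝ} (hh : 0 ≤ h) (c : ℂ) (x : ℝ) :
    ‖cexp (c * x - c ^ 2 * h / 2)‖ ≤ Real.exp (‖c‖ ^ 2 * h / 2 + ‖c‖ * |x|) := by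
  refine (norm_exp_le_exp_norm _).trans (Real.exp_le_exp.mpr ?_)
  calc ‖c * x - c ^ 2 * h / 2‖ ≤ ‖c * x‖ + ‖c ^ 2 * h / 2‖ := norm_sub_le _ _
    _ = ‖c‖ ^ 2 * h / 2 + ‖c‖ * |x| := by
      simp only [Complex.norm_mul, norm_real, Real.norm_eq_abs, Complex.norm_div, norm_pow,
        abs_of_nonneg hh, norm_ofNat]
      ring

lemma norm_cexp_sub_one_div_mul_sub (h r x : ℝ) (E : ℂ) :
    ‖(cexp (r * x - r ^ 2 * h / 2) - 1) / r * E - x * E‖ = |(wickExp h r x - 1) / r - x| * ‖E‖ := by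
  rw [← sub_mul, norm_mul, wickExp, ← Real.norm_eq_abs, ← Complex.norm_real]
  push_cast
  rfl

theorem tendsto_integral_norm_sq_cexp_sub_one_div_mul_sub {Ω : Type*} [MeasurableSpace Ω]
    {P : Measure Ω} {X : Ω → ℝ} (hX : AEMeasurable X P) {h : ℝ} (hh : 0 ≤ h)
    (hmom : ∀ t, Integrable (fun ω ↦ Real.exp (t * X ω)) P) (c : ℂ) :
    Tendsto
      (fun r : ℝ ↦ ∫ ω, ‖(cexp (r * X ω - r ^ 2 * h / 2) - 1) / r * cexp (c * X ω - c ^ 2 * h / 2)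
          - X ω * cexp (c * X ω - c ^ 2 * h / 2)‖ ^ 2 ∂P)
      (𝓝[≠] 0) (𝓝 0) := by
  simp_rw [norm_cexp_sub_one_div_mul_sub]
  set bound : ℝ → ℝ := fun x ↦
    (2 * Real.exp (h + 2 * |x|) * Real.exp (‖c‖ ^ 2 * h / 2 + ‖c‖ * |x|)) ^ 2
  have hbound_int : Integrable (fun ω ↦ bound (X ω)) P := by
    have hexp := integrable_exp_abs_mul_abs (hmom (4 + 2 * ‖c‖)) (hmom (-(4 + 2 * ‖c‖)))
    rw [abs_of_nonneg (by positivity)] at hexp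
    refine (hexp.const_mul (4 * Real.exp (2 * h + ‖c‖ ^ 2 * h))).congr (ae_of_all _ fun ω ↦ ?_)
    simp only [bound, mul_pow, ← Real.exp_nat_mul, mul_assoc, ← Real.exp_add]
    ring_nf
  have hsmall : ∀ᶠ r : ℝ in 𝓝[≠] 0, |r| ≤ 1 :=
    eventually_nhdsWithin_of_eventually_nhds <|
      (eventually_abs_sub_lt 0 one_pos).mono fun r hr ↦ by simpa using hr.le
  rw [show 𝓝 (0 : ℝ) = 𝓝 (∫ _, (0 : ℝ) ∂P) by simp]
  refine tendsto_integral_filter_of_dominated_convergence (fun ω ↦ bound (X ω))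
    (Eventually.of_forall fun r ↦ ?_) ?_ hbound_int (ae_of_all _ fun ω ↦ ?_)
  · have hcont : Continuous fun x : ℝ ↦
        (|(wickExp h r x - 1) / r - x| * ‖cexp (c * x - c ^ 2 * h / 2)‖) ^ 2 := by
      unfold wickExp; fun_prop
    exact (hcont.measurable.comp_aemeasurable hX).aestronglyMeasurable
  · filter_upwards [hsmall] with r hr
    refine ae_of_all _ fun ω ↦ ?_
    rw [Real.norm_eq_abs, abs_of_nonneg (by positivity)]
    simp only [bound]
    gcongr
    · exact abs_wickExp_sub_one_div_sub_le _ hh hr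
    · exact norm_cexp_mul_sub_sq_le hh c _
  · simpa using (((tendsto_wickExp_sub_one_div h (X ω)).sub_const (X ω)).abs.mul_const
      ‖cexp (c * X ω - c ^ 2 * h / 2)‖).pow 2

theorem stmt_6_general {Ω : Type*} [MeasurableSpace Ω] (P : Measure Ω) [IsProbabilityMeasure P]
    (X : Ω → ℝ) (h : ℝ≥0)
    (hlaw : Measure.map X P = gaussianReal 0 h) (c : ℂ) :
    Tendsto
      (fun r : ℝ => ∫ ω, ‖(Complex.exp ((r : ℂ) * X ω - (r : ℂ) ^ 2 * (h : ℝ) / 2) - 1) / (r : ℂ) *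
          Complex.exp (c * X ω - c ^ 2 * (h : ℝ) / 2) -
          (X ω : ℂ) * Complex.exp (c * X ω - c ^ 2 * (h : ℝ) / 2)‖ ^ 2 ∂P)
      (nhdsWithin 0 {0}ᶜ) (nhds 0) := by
  have hX : AEMeasurable X P := aemeasurable_of_map_neZero (by rw [hlaw]; infer_instance)
  refine tendsto_integral_norm_sq_cexp_sub_one_div_mul_sub hX h.coe_nonneg (fun t ↦ ?_) c
  rw [← mgf_pos_iff, mgf_gaussianReal hlaw]
  exact Real.exp_pos _

/-- (E_r - 1)/r · E_c → X·E_c in L² as the real parameter r → 0. -/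
theorem stmt_6 {Ω : Type*} [MeasurableSpace Ω] (P : Measure Ω) [IsProbabilityMeasure P]
    (X : Ω → ℝ) (hX : Measurable X) (h : ℝ≥0) (hpos : 0 < h)
    (hlaw : Measure.map X P = gaussianReal 0 h) (c : ℂ) :
    Tendsto
      (fun r : ℝ => ∫ ω, ‖(Complex.exp ((r : ℂ) * X ω - (r : ℂ) ^ 2 * (h : ℝ) / 2) - 1) / (r : ℂ) *
          Complex.exp (c * X ω - c ^ 2 * (h : ℝ) / 2) -
          (X ω : ℂ) * Complex.exp (c * X ω - c ^ 2 * (h : ℝ) / 2)‖ ^ 2 ∂P)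
      (nhdsWithin 0 {0}ᶜ) (nhds 0) :=
  stmt_6_general P X h hlaw c
end

section
/- Let X ~ N(0, h) with h ≥ 0 and E_c := exp(c·X − c²h/2). Then for all c, d ∈ ℂ: E[X · E_c · E_d] = (c + d)·h·exp(c·d·h). -/
/-!
The product `E_c E_d` equals `exp (-(c² + d²) h / 2) · exp ((c + d) X)`, so everything reduces to
`E[X exp (z X)]`. That is the derivative at `z` of the complex moment generating function
`z ↦ exp (h z² / 2)` of `X`, namely `h z exp (h z² / 2)`; at `z = c + d` the exponentials
recombine to `exp (c d h)`.
-/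

open MeasureTheory ProbabilityTheory Complex NNReal

namespace ProbabilityTheory

variable {Ω : Type*} {mΩ : MeasurableSpace Ω} {p : Measure Ω} {X : Ω → ℝ} {μ : ℝ} {v : ℝ≥0}

lemma integrableExpSet_eq_univ_of_map_eq_gaussianReal (hX : p.map X = gaussianReal μ v) :
    integrableExpSet X p = Set.univ := by
  have : NeZero p :=
    ⟨fun hp ↦ IsProbabilityMeasure.ne_zero (gaussianReal μ v) (by simp [← hX, hp])⟩
  refine Set.eq_univ_of_forall fun t ↦ mgf_pos_iff.mp ?_
  rw [mgf_gaussianReal hX]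
  exact Real.exp_pos _

lemma integral_mul_cexp_of_map_eq_gaussianReal (hX : p.map X = gaussianReal μ v) (z : ℂ) :
    ∫ ω, X ω * cexp (z * X ω) ∂p = (μ + v * z) * cexp (z * μ + v * z ^ 2 / 2) := by
  have hz : z.re ∈ interior (integrableExpSet X p) := by
    simp [integrableExpSet_eq_univ_of_map_eq_gaussianReal hX]
  have hMGF := hasDerivAt_complexMGF hz
  rw [funext (complexMGF_gaussianReal hX)] at hMGF
  refine hMGF.unique ?_
  have hexponent : HasDerivAt (fun z : ℂ ↦ z * μ + v * z ^ 2 / 2) (μ + v * z) z :=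
    (((hasDerivAt_id' z).mul_const (μ : ℂ)).add
      (((hasDerivAt_pow 2 z).const_mul (v : ℂ)).div_const 2)).congr_deriv (by ring)
  simpa [mul_comm] using hexponent.cexp

end ProbabilityTheory

theorem stmt_9_general {Ω : Type*} [MeasurableSpace Ω] (P : Measure Ω)
    (X : Ω → ℝ) (h : ℝ≥0)
    (hlaw : Measure.map X P = gaussianReal 0 h) (c d : ℂ) :
    ∫ ω, (X ω : ℂ) * Complex.exp (c * X ω - c ^ 2 * (h : ℝ) / 2) *
        Complex.exp (d * X ω - d ^ 2 * (h : ℝ) / 2) ∂P =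
      (c + d) * (h : ℝ) * Complex.exp (c * d * (h : ℝ)) := by
  have hfactor : ∀ x : ℝ, (x : ℂ) * cexp (c * x - c ^ 2 * (h : ℝ) / 2) *
      cexp (d * x - d ^ 2 * (h : ℝ) / 2) =
      cexp (-(c ^ 2 + d ^ 2) * (h : ℝ) / 2) * (x * cexp ((c + d) * x)) := by
    intro x
    rw [mul_assoc, ← Complex.exp_add, mul_left_comm, ← Complex.exp_add]
    congr 2
    ring
  simp_rw [hfactor]
  rw [integral_const_mul, integral_mul_cexp_of_map_eq_gaussianReal hlaw, mul_left_comm,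
    ← Complex.exp_add]
  push_cast
  ring_nf

/-- E[X·E_c·E_d] = (c+d)·h·exp(c·d·h). -/
theorem stmt_9 {Ω : Type*} [MeasurableSpace Ω] (P : Measure Ω) [IsProbabilityMeasure P]
    (X : Ω → ℝ) (hX : Measurable X) (h : ℝ≥0)
    (hlaw : Measure.map X P = gaussianReal 0 h) (c d : ℂ) :
    ∫ ω, (X ω : ℂ) * Complex.exp (c * X ω - c ^ 2 * (h : ℝ) / 2) *
        Complex.exp (d * X ω - d ^ 2 * (h : ℝ) / 2) ∂P =
      (c + d) * (h : ℝ) * Complex.exp (c * d * (h : ℝ)) :=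
  stmt_9_general P X h hlaw c d
end

section
/- Let H be a complex Hilbert space and Y ∈ H. Suppose c, c̃ ∈ ℝ, operators D, D* satisfy ⟨D*u, v⟩ = ⟨u, Dv⟩ on the relevant vectors, and [D, D*]Y = h·Y with h ≥ 0. Then ‖(D + D* − c)Y‖ · ‖(−D + D* + i c̃)Y‖ ≥ h·‖Y‖². -/
open Complex

/-- abstract Heisenberg-type inequality:
‖(D + D* − c)Y‖·‖(−D + D* + i c̃)Y‖ ≥ h‖Y‖². -/
theorem stmt_15 {H : Type*} [NormedAddCommGroup H] [InnerProductSpace ℂ H]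
    (Y : H) (D Dstar : H →ₗ[ℂ] H)
    (hadj : ∀ u v : H, (inner ℂ (D u) v : ℂ) = inner ℂ u (Dstar v))
    (h : ℝ) (hh : 0 ≤ h)
    (hcomm : D (Dstar Y) - Dstar (D Y) = (h : ℂ) • Y)
    (c ctilde : ℝ) :
    ‖D Y + Dstar Y - (c : ℂ) • Y‖ * ‖-(D Y) + Dstar Y + (Complex.I * ctilde) • Y‖ ≥
      h * ‖Y‖ ^ 2 := by
  set u : H := D Y + Dstar Y - (c : ℂ) • Y with hu
  set v : H := -(D Y) + Dstar Y + (Complex.I * ctilde) • Y with hv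
  -- key commutator identity
  have hbb : (inner ℂ (Dstar Y) (Dstar Y) : ℂ)
      = inner ℂ (D (Dstar Y)) Y := (hadj (Dstar Y) Y).symm
  have haa : (inner ℂ (D Y) (D Y) : ℂ) = inner ℂ (Dstar (D Y)) Y := by
    have h1 : (inner ℂ (D Y) (D Y) : ℂ) = inner ℂ Y (Dstar (D Y)) := hadj Y (D Y)
    calc (inner ℂ (D Y) (D Y) : ℂ)
        = starRingEnd ℂ (inner ℂ (D Y) (D Y)) := (inner_self_conj _).symm
      _ = starRingEnd ℂ (inner ℂ Y (Dstar (D Y))) := by rw [h1]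
      _ = inner ℂ (Dstar (D Y)) Y := inner_conj_symm _ _
  have hkey : (inner ℂ (Dstar Y) (Dstar Y) : ℂ) - inner ℂ (D Y) (D Y)
      = (h : ℂ) * inner ℂ Y Y := by
    rw [hbb, haa, ← inner_sub_left, hcomm, inner_smul_left]
    simp
  have hay : (inner ℂ (D Y) Y : ℂ) = inner ℂ Y (Dstar Y) := hadj Y Y
  have hby : (inner ℂ (Dstar Y) Y : ℂ) = inner ℂ Y (D Y) := by
    calc (inner ℂ (Dstar Y) Y : ℂ)
        = starRingEnd ℂ (inner ℂ Y (Dstar Y)) := (inner_conj_symm _ _).symm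
      _ = starRingEnd ℂ (inner ℂ (D Y) Y) := by rw [hay]
      _ = inner ℂ Y (D Y) := inner_conj_symm _ _
  -- 2 Re ⟨u, v⟩ = 2 h ‖Y‖²
  have hsum : (inner ℂ u v : ℂ) + inner ℂ v u = 2 * (h : ℂ) * inner ℂ Y Y := by
    simp only [hu, hv, inner_add_left, inner_add_right, inner_sub_left,
      inner_sub_right, inner_neg_left, inner_neg_right, inner_smul_left,
      inner_smul_right, map_mul, Complex.conj_I, Complex.conj_ofReal]
    ring_nf
    linear_combination (2 : ℂ) * hkey + (Complex.I * ctilde - c) * hay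
      + (Complex.I * ctilde + c) * hby
      + (-Complex.I * ctilde - c) * (hadj Y Y)
      + (-Complex.I * ctilde + c) * hby
      + ((3 : ℂ) * c + Complex.I * ctilde) * hay
      + (Complex.I * ctilde - (3 : ℂ) * c) * hby
  have hre : (inner ℂ u v : ℂ).re = h * ‖Y‖ ^ 2 := by
    have hconj : starRingEnd ℂ (inner ℂ u v : ℂ) = inner ℂ v u := inner_conj_symm _ _
    have := hsum
    rw [← hconj, Complex.add_conj] at this
    have hin : (inner ℂ Y Y : ℂ) = ((‖Y‖ ^ 2 : ℝ) : ℂ) := by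
      rw [inner_self_eq_norm_sq_to_K]; norm_cast
    rw [hin] at this
    have h2 : (2 * (inner ℂ u v : ℂ).re : ℝ) = 2 * h * ‖Y‖ ^ 2 := by
      exact_mod_cast this
    linarith
  calc h * ‖Y‖ ^ 2 = (inner ℂ u v : ℂ).re := hre.symm
    _ ≤ ‖(inner ℂ u v : ℂ)‖ := Complex.re_le_norm _
    _ ≤ ‖u‖ * ‖v‖ := norm_inner_le_norm u v
end
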